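/- Let n ≥ 1, 1 ≤ k ≤ n, and z_1, …, z_n ≥ 1. Then for all U, V ∈ U(n), ‖ M_{n,k}(U) − M_{n,k}(V) ‖₂ ≤ 4 ‖Ẑ‖_∞ ‖U − V‖₂, where ‖·‖₂ is the Frobenius norm and ‖Ẑ‖_∞ the operator (spectral) norm. -/

import Mathlib

open MeasureTheory Matrix

noncomputable instance (n : ℕ) : MeasurableSpace (Matrix.unitaryGroup (Fin n) ℂ) := borel _
instance (n : ℕ) : BorelSpace (Matrix.unitaryGroup (Fin n) ℂ) := ⟨rfl⟩

/-- `η(U) = [[Re U, Im U], [−Im U, Re U]]` in block form. -/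
noncomputable def eta {n : ℕ} (U : Matrix.unitaryGroup (Fin n) ℂ) :
    Matrix (Fin n ⊕ Fin n) (Fin n ⊕ Fin n) ℝ :=
  Matrix.fromBlocks
    (Matrix.of fun i j => ((U : Matrix (Fin n) (Fin n) ℂ) i j).re)
    (Matrix.of fun i j => ((U : Matrix (Fin n) (Fin n) ℂ) i j).im)
    (Matrix.of fun i j => -((U : Matrix (Fin n) (Fin n) ℂ) i j).im)
    (Matrix.of fun i j => ((U : Matrix (Fin n) (Fin n) ℂ) i j).re)

/-- The `2n×2n` symplectic form matrix `J = [[0, −I], [I, 0]]`. -/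
def Jmat (n : ℕ) : Matrix (Fin n ⊕ Fin n) (Fin n ⊕ Fin n) ℝ :=
  Matrix.fromBlocks 0 (-1) 1 0

/-- `Ẑ = Z ⊕ Z⁻¹` for `Z = diag (z 1, …, z n)`. -/
noncomputable def Zhat {n : ℕ} (z : Fin n → ℝ) :
    Matrix (Fin n ⊕ Fin n) (Fin n ⊕ Fin n) ℝ :=
  Matrix.fromBlocks (Matrix.diagonal z) 0 0 (Matrix.diagonal fun j => (z j)⁻¹)

/-- `Π̂ = Π ⊕ Π` where `Π` is the diagonal projection with `k` ones. -/
def Pihat (n k : ℕ) : Matrix (Fin n ⊕ Fin n) (Fin n ⊕ Fin n) ℝ :=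
  Matrix.fromBlocks
    (Matrix.diagonal fun j : Fin n => if (j : ℕ) < k then (1 : ℝ) else 0) 0 0
    (Matrix.diagonal fun j : Fin n => if (j : ℕ) < k then (1 : ℝ) else 0)

/-- `M_{n,k}(U) = Π̂ η(U) Ẑ η(U)ᵀ Π̂`, the covariance matrix of the reduced state. -/
noncomputable def Mnk {n : ℕ} (k : ℕ) (z : Fin n → ℝ)
    (U : Matrix.unitaryGroup (Fin n) ℂ) :
    Matrix (Fin n ⊕ Fin n) (Fin n ⊕ Fin n) ℝ :=
  Pihat n k * eta U * Zhat z * (eta U)ᵀ * Pihat n k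

/-- `A = (Z − Z⁻¹)/2`. -/
noncomputable def Amat {n : ℕ} (z : Fin n → ℝ) : Matrix (Fin n) (Fin n) ℝ :=
  Matrix.diagonal fun j => (z j - (z j)⁻¹) / 2

/-- `B = (Z + Z⁻¹)/2`. -/
noncomputable def Bmat {n : ℕ} (z : Fin n → ℝ) : Matrix (Fin n) (Fin n) ℝ :=
  Matrix.diagonal fun j => (z j + (z j)⁻¹) / 2

/-- The average energy `λ(n) = (1/(2n)) Σ_j (z_j + 1/z_j)`. -/
noncomputable def avgE {n : ℕ} (z : Fin n → ℝ) : ℝ :=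
  (∑ j, (z j + (z j)⁻¹)) / (2 * n)
/-- Frobenius (Hilbert–Schmidt) norm `‖X‖₂ = √(Σ |X i j|²) = √(tr(X*X))`. -/
noncomputable def frob {m m' : Type*} [Fintype m] [Fintype m'] {𝕜 : Type*} [RCLike 𝕜]
    (X : Matrix m m' 𝕜) : ℝ := Real.sqrt (∑ i, ∑ j, ‖X i j‖ ^ 2)

/-- Operator (spectral) norm of a real square matrix. -/
noncomputable def opNorm {m : Type*} [Fintype m] [DecidableEq m] (X : Matrix m m ℝ) : ℝ :=
  ‖LinearMap.toContinuousLinearMap (Matrix.toEuclideanLin X)‖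


/-! ### Auxiliary lemmas -/

section FrobBasics
variable {m m' : Type*} [Fintype m] [Fintype m'] {𝕜 : Type*} [RCLike 𝕜]

lemma frob_nonneg (X : Matrix m m' 𝕜) : 0 ≤ frob X := Real.sqrt_nonneg _

lemma frob_transpose (X : Matrix m m' 𝕜) : frob Xᵀ = frob X := by
  unfold frob
  congr 1
  rw [Finset.sum_comm]
  simp [Matrix.transpose_apply]

section
attribute [local instance] Matrix.frobeniusSeminormedAddCommGroup

lemma frob_eq_frobeniusNorm (X : Matrix m m' 𝕜) : frob X = ‖X‖ := by
  rw [Matrix.frobenius_norm_def, ← Real.sqrt_eq_rpow, frob]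
  congr 1
  exact Finset.sum_congr rfl fun i _ => Finset.sum_congr rfl fun j _ => (Real.rpow_two _).symm

lemma frob_add_le (X Y : Matrix m m' 𝕜) : frob (X + Y) ≤ frob X + frob Y := by
  simp only [frob_eq_frobeniusNorm]; exact norm_add_le X Y
end

end FrobBasics

section OpNormBasics
open scoped Matrix.Norms.L2Operator
variable {m m' : Type*} [Fintype m] [Fintype m'] [DecidableEq m] [DecidableEq m']

lemma opNorm_eq (X : Matrix m m ℝ) : opNorm X = ‖X‖ := rfl

lemma opNorm_nonneg (X : Matrix m m ℝ) : 0 ≤ opNorm X := norm_nonneg _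

lemma conjTranspose_real (X : Matrix m m' ℝ) : Xᴴ = Xᵀ := by
  ext i j; simp [Matrix.conjTranspose_apply]

lemma opNorm_transpose (X : Matrix m m ℝ) : opNorm Xᵀ = opNorm X := by
  rw [opNorm_eq, opNorm_eq, ← conjTranspose_real, Matrix.l2_opNorm_conjTranspose]

lemma opNorm_le_one_of_orthogonal (W : Matrix m m ℝ) (h : Wᵀ * W = 1) : opNorm W ≤ 1 := by
  rw [opNorm_eq]
  have h2 : ‖Wᴴ * W‖ = ‖W‖ * ‖W‖ := Matrix.l2_opNorm_conjTranspose_mul_self W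
  rw [conjTranspose_real, h] at h2
  have h1 : ‖(1 : Matrix m m ℝ)‖ ≤ 1 := by
    have h3 := Matrix.l2_opNorm_conjTranspose_mul_self (1 : Matrix m m ℝ)
    rw [conjTranspose_real, Matrix.transpose_one, one_mul] at h3
    nlinarith [norm_nonneg (1 : Matrix m m ℝ)]
  nlinarith [norm_nonneg W]

lemma frob_mul_le_left (A : Matrix m m ℝ) (B : Matrix m m' ℝ) :
    frob (A * B) ≤ opNorm A * frob B := by
  have key : ∀ j, ∑ i, ‖(A * B) i j‖ ^ 2 ≤ opNorm A ^ 2 * ∑ i, ‖B i j‖ ^ 2 := by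
    intro j
    have hb := (LinearMap.toContinuousLinearMap (Matrix.toEuclideanLin A)).le_opNorm
        ((WithLp.equiv 2 (m → ℝ)).symm fun i => B i j)
    rw [LinearMap.coe_toContinuousLinearMap', WithLp.equiv_symm_apply,
      Matrix.toEuclideanLin_apply_piLp_toLp]
      at hb
    rw [EuclideanSpace.norm_eq, EuclideanSpace.norm_eq] at hb
    simp only [PiLp.toLp_apply] at hb
    have hAB : ∀ i, (A * B) i j = (A *ᵥ fun i' => B i' j) i := by
      intro i; simp [Matrix.mul_apply, Matrix.mulVec, dotProduct]
    calc ∑ i, ‖(A * B) i j‖ ^ 2 = ∑ i, ‖(A *ᵥ fun i' => B i' j) i‖ ^ 2 := by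
          exact Finset.sum_congr rfl fun i _ => by rw [hAB i]
      _ = Real.sqrt (∑ i, ‖(A *ᵥ fun i' => B i' j) i‖ ^ 2) ^ 2 :=
          (Real.sq_sqrt (by positivity)).symm
      _ ≤ (opNorm A * Real.sqrt (∑ i, ‖B i j‖ ^ 2)) ^ 2 := by
          apply pow_le_pow_left₀ (Real.sqrt_nonneg _) ?_ 2
          exact hb
      _ = opNorm A ^ 2 * ∑ i, ‖B i j‖ ^ 2 := by
          rw [mul_pow, Real.sq_sqrt (by positivity)]
  unfold frob
  have h1 : ∑ i, ∑ j, ‖(A * B) i j‖ ^ 2 ≤ opNorm A ^ 2 * ∑ i, ∑ j, ‖B i j‖ ^ 2 := by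
    calc ∑ i, ∑ j, ‖(A * B) i j‖ ^ 2 = ∑ j, ∑ i, ‖(A * B) i j‖ ^ 2 := Finset.sum_comm
      _ ≤ ∑ j, opNorm A ^ 2 * ∑ i, ‖B i j‖ ^ 2 := Finset.sum_le_sum fun j _ => key j
      _ = opNorm A ^ 2 * ∑ j, ∑ i, ‖B i j‖ ^ 2 := by rw [Finset.mul_sum]
      _ = opNorm A ^ 2 * ∑ i, ∑ j, ‖B i j‖ ^ 2 := by rw [Finset.sum_comm]
  calc Real.sqrt (∑ i, ∑ j, ‖(A * B) i j‖ ^ 2)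
      ≤ Real.sqrt (opNorm A ^ 2 * ∑ i, ∑ j, ‖B i j‖ ^ 2) := Real.sqrt_le_sqrt h1
    _ = opNorm A * Real.sqrt (∑ i, ∑ j, ‖B i j‖ ^ 2) := by
        rw [Real.sqrt_mul (sq_nonneg _), Real.sqrt_sq (opNorm_nonneg _)]

lemma frob_mul_le_right (A : Matrix m m' ℝ) (B : Matrix m' m' ℝ) :
    frob (A * B) ≤ frob A * opNorm B := by
  rw [← frob_transpose (A * B), Matrix.transpose_mul]
  calc frob (Bᵀ * Aᵀ) ≤ opNorm Bᵀ * frob Aᵀ := frob_mul_le_left _ _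
    _ = frob A * opNorm B := by rw [opNorm_transpose, frob_transpose, mul_comm]

end OpNormBasics

lemma eta_mul_transpose {n : ℕ} (U : Matrix.unitaryGroup (Fin n) ℂ) :
    eta U * (eta U)ᵀ = 1 := by
  have hU : (U : Matrix (Fin n) (Fin n) ℂ) * star (U : Matrix (Fin n) (Fin n) ℂ) = 1 :=
    Matrix.mem_unitaryGroup_iff.mp U.2
  set R : Matrix (Fin n) (Fin n) ℝ :=
    Matrix.of fun i j => ((U : Matrix (Fin n) (Fin n) ℂ) i j).re with hR
  set I : Matrix (Fin n) (Fin n) ℝ :=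
    Matrix.of fun i j => ((U : Matrix (Fin n) (Fin n) ℂ) i j).im with hI
  have hre : R * Rᵀ + I * Iᵀ = 1 := by
    ext i j
    have h := congrArg Complex.re (congrFun (congrFun hU i) j)
    simp only [Matrix.mul_apply, Matrix.star_apply, Complex.re_sum, Complex.mul_re,
      Complex.conj_re, Complex.conj_im, RCLike.star_def, Matrix.one_apply] at h
    simp only [Matrix.add_apply, Matrix.mul_apply, Matrix.transpose_apply, hR, hI,
      Matrix.of_apply, Matrix.one_apply, ← Finset.sum_add_distrib]
    simp only [mul_neg, sub_neg_eq_add, apply_ite Complex.re, Complex.one_re,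
      Complex.zero_re] at h
    exact h
  have him : I * Rᵀ - R * Iᵀ = 0 := by
    ext i j
    have h := congrArg Complex.im (congrFun (congrFun hU i) j)
    simp only [Matrix.mul_apply, Matrix.star_apply, Complex.im_sum, Complex.mul_im,
      Complex.conj_re, Complex.conj_im, RCLike.star_def, Matrix.one_apply] at h
    simp only [mul_neg, apply_ite Complex.im, Complex.one_im, Complex.zero_im, ite_self] at h
    simp only [Matrix.sub_apply, Matrix.mul_apply, Matrix.transpose_apply, hR, hI,
      Matrix.of_apply, Matrix.zero_apply, ← Finset.sum_sub_distrib]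
    rw [← h]
    apply Finset.sum_congr rfl; intro k _; ring
  have him' : I * Rᵀ = R * Iᵀ := sub_eq_zero.mp him
  have heta : eta U = Matrix.fromBlocks R I (-I) R := rfl
  rw [heta, Matrix.fromBlocks_transpose, Matrix.transpose_neg, Matrix.fromBlocks_multiply,
    mul_neg, neg_mul, neg_mul_neg, him', neg_add_cancel, add_comm (I * Iᵀ) (R * Rᵀ), hre,
    Matrix.fromBlocks_one]

lemma transpose_mul_eta {n : ℕ} (U : Matrix.unitaryGroup (Fin n) ℂ) :
    (eta U)ᵀ * eta U = 1 :=
  mul_eq_one_comm.mp (eta_mul_transpose U)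


lemma frob_Pihat_mul_le {n : ℕ} (k : ℕ) (X : Matrix (Fin n ⊕ Fin n) (Fin n ⊕ Fin n) ℝ) :
    frob (Pihat n k * X * Pihat n k) ≤ frob X := by
  set p : Fin n ⊕ Fin n → ℝ :=
    Sum.elim (fun j : Fin n => if (j : ℕ) < k then (1 : ℝ) else 0)
      (fun j : Fin n => if (j : ℕ) < k then (1 : ℝ) else 0) with hp
  have hP : Pihat n k = Matrix.diagonal p := (Matrix.fromBlocks_diagonal _ _)
  have hpv : ∀ a, p a = 0 ∨ p a = 1 := by
    rintro (a | a) <;> simp only [hp, Sum.elim_inl, Sum.elim_inr] <;> split <;> simp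
  rw [hP]
  apply Real.sqrt_le_sqrt
  apply Finset.sum_le_sum; intro i _
  apply Finset.sum_le_sum; intro j _
  rw [Matrix.mul_diagonal, Matrix.diagonal_mul]
  rcases hpv i with h1 | h1 <;> rcases hpv j with h2 | h2 <;>
    simp [h1, h2] <;> positivity

lemma frob_eta_sub {n : ℕ} (U V : Matrix.unitaryGroup (Fin n) ℂ) :
    frob (eta U - eta V) ≤ Real.sqrt 2 *
      frob ((U : Matrix (Fin n) (Fin n) ℂ) - (V : Matrix (Fin n) (Fin n) ℂ)) := by
  unfold frob
  rw [← Real.sqrt_mul (by norm_num : (0:ℝ) ≤ 2)]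
  apply Real.sqrt_le_sqrt
  have key : (∑ i, ∑ j, ‖(eta U - eta V) i j‖ ^ 2)
      = 2 * ∑ i, ∑ j,
        ‖((U : Matrix (Fin n) (Fin n) ℂ) - (V : Matrix (Fin n) (Fin n) ℂ)) i j‖ ^ 2 := by
    simp only [Fintype.sum_sum_type, eta, Matrix.sub_apply, Matrix.fromBlocks_apply₁₁,
      Matrix.fromBlocks_apply₁₂, Matrix.fromBlocks_apply₂₁, Matrix.fromBlocks_apply₂₂,
      Matrix.of_apply, Real.norm_eq_abs, sq_abs, Complex.sq_norm,
      Complex.normSq_apply, Complex.sub_re, Complex.sub_im]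
    simp only [show ∀ a b : ℝ, -a - -b = -(a - b) from fun a b => by ring, neg_sq,
      show ∀ a b : ℝ, a * a + b * b = a ^ 2 + b ^ 2 from fun a b => by ring,
      Finset.sum_add_distrib, Finset.mul_sum]
    ring
  rw [key]


/-- **Lemma (Lipschitz bound for the reduced covariance matrix)** (Statement 12):
`‖M_{n,k}(U) − M_{n,k}(V)‖₂ ≤ 4 ‖Ẑ‖_∞ ‖U − V‖₂` for all unitaries `U, V`. -/
theorem Mnk_lipschitz (n k : ℕ) (hn : 1 ≤ n) (hk1 : 1 ≤ k) (hkn : k ≤ n)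
    (z : Fin n → ℝ) (hz : ∀ j, 1 ≤ z j)
    (U V : Matrix.unitaryGroup (Fin n) ℂ) :
    frob (Mnk k z U - Mnk k z V)
      ≤ 4 * opNorm (Zhat z)
          * frob ((U : Matrix (Fin n) (Fin n) ℂ) - (V : Matrix (Fin n) (Fin n) ℂ)) := by
  have hsplit : Mnk k z U - Mnk k z V
      = Pihat n k * ((eta U - eta V) * Zhat z * (eta U)ᵀ
          + eta V * Zhat z * (eta U - eta V)ᵀ) * Pihat n k := by
    unfold Mnk
    rw [Matrix.transpose_sub]
    noncomm_ring
  have hopU : opNorm ((eta U)ᵀ) ≤ 1 :=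
    opNorm_le_one_of_orthogonal _
      (by rw [Matrix.transpose_transpose]; exact eta_mul_transpose U)
  have hopV : opNorm (eta V) ≤ 1 := opNorm_le_one_of_orthogonal _ (transpose_mul_eta V)
  set D := eta U - eta V with hDdef
  set cf := frob ((U : Matrix (Fin n) (Fin n) ℂ) - (V : Matrix (Fin n) (Fin n) ℂ)) with hcf
  have hZ : 0 ≤ opNorm (Zhat z) := opNorm_nonneg _
  have hfD : 0 ≤ frob D := frob_nonneg _
  have hcf0 : 0 ≤ cf := frob_nonneg _
  have h1 : frob (D * Zhat z * (eta U)ᵀ) ≤ frob D * opNorm (Zhat z) := by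
    calc frob (D * Zhat z * (eta U)ᵀ) ≤ frob (D * Zhat z) * opNorm ((eta U)ᵀ) :=
          frob_mul_le_right _ _
      _ ≤ frob (D * Zhat z) * 1 :=
          mul_le_mul_of_nonneg_left hopU (frob_nonneg _)
      _ = frob (D * Zhat z) := mul_one _
      _ ≤ frob D * opNorm (Zhat z) := frob_mul_le_right _ _
  have h2 : frob (eta V * Zhat z * Dᵀ) ≤ frob D * opNorm (Zhat z) := by
    rw [mul_assoc]
    calc frob (eta V * (Zhat z * Dᵀ)) ≤ opNorm (eta V) * frob (Zhat z * Dᵀ) :=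
          frob_mul_le_left _ _
      _ ≤ 1 * frob (Zhat z * Dᵀ) := mul_le_mul_of_nonneg_right hopV (frob_nonneg _)
      _ = frob (Zhat z * Dᵀ) := one_mul _
      _ ≤ opNorm (Zhat z) * frob Dᵀ := frob_mul_le_left _ _
      _ = frob D * opNorm (Zhat z) := by rw [frob_transpose, mul_comm]
  have hD2 : frob D ≤ Real.sqrt 2 * cf := frob_eta_sub U V
  have hs2 : Real.sqrt 2 ≤ 2 := by
    nlinarith [Real.sq_sqrt (by norm_num : (0:ℝ) ≤ 2), Real.sqrt_nonneg 2]
  calc frob (Mnk k z U - Mnk k z V)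
      = frob (Pihat n k * (D * Zhat z * (eta U)ᵀ + eta V * Zhat z * Dᵀ) * Pihat n k) := by
        rw [hsplit]
    _ ≤ frob (D * Zhat z * (eta U)ᵀ + eta V * Zhat z * Dᵀ) := frob_Pihat_mul_le _ _
    _ ≤ frob (D * Zhat z * (eta U)ᵀ) + frob (eta V * Zhat z * Dᵀ) := frob_add_le _ _
    _ ≤ 2 * (frob D * opNorm (Zhat z)) := by linarith
    _ ≤ 4 * opNorm (Zhat z) * cf := by
        nlinarith [mul_le_mul_of_nonneg_right hD2 hZ,
          mul_le_mul_of_nonneg_right (mul_le_mul_of_nonneg_right hs2 hcf0) hZ]
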